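/- Let q be even, a ∈ F_q^*, b ∈ F_{q^2}^*, and let f(X) = X^4(1 + aX^{q-1} + bX^{3(q-1)}). Then f is a permutation polynomial of F_{q^2} if and only if the polynomial 1 + aX + bX^3 has no root in μ_{q+1} and the rational function g(X) = X(b^q + aX^2 + X^3)/(1 + aX + bX^3) permutes μ_{q+1}. -/

import Mathlib

/-!
Write `f x = x ^ r * h (x ^ s)` on a finite field `K` with `s * d = |K| - 1` and `r` coprime
to `s`. Then `x ↦ x ^ s` maps `Kˣ` onto the `d`-th roots of unity `μ_d`, and
`f x ^ s = ψ (x ^ s)` with `ψ u = u ^ r * h u ^ s`, so `f` permutes `K` exactly when `ψ`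
permutes `μ_d`: the fibres of `x ↦ x ^ s` are cosets of `μ_s`, on which `x ↦ x ^ r` is
bijective. Here `r = 4`, `s = q - 1`, `d = q + 1`, and on `μ_{q+1}` the Frobenius `u ↦ u ^ q`
is inversion, which turns `ψ` into `g`.
-/

open Function Set

theorem IsCyclic.exists_pow_eq_of_pow_eq_one {G : Type*} [CommGroup G] [IsCyclic G] [Finite G]
    {s d : ℕ} (hG : Nat.card G = s * d) {u : G} (hu : u ^ d = 1) : ∃ x : G, x ^ s = u := by
  have hs : s ≠ 0 := left_ne_zero_of_mul (hG ▸ Nat.card_pos.ne')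
  have hle : (powMonoidHom s : G →* G).range ≤ (powMonoidHom d).ker := by
    rintro _ ⟨x, rfl⟩
    rw [MonoidHom.mem_ker, powMonoidHom_apply, powMonoidHom_apply, ← pow_mul, ← hG,
      pow_card_eq_one']
  have hcard :
      Nat.card (powMonoidHom d : G →* G).ker ≤ Nat.card (powMonoidHom s : G →* G).range := by
    rw [card_powMonoidHom_range, card_powMonoidHom_ker, hG, Nat.gcd_mul_left_left,
      Nat.gcd_mul_right_left, Nat.mul_div_cancel_left _ (Nat.pos_of_ne_zero hs)]
  have hu' : u ∈ (powMonoidHom d : G →* G).ker := hu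
  rwa [← Subgroup.eq_of_le_of_card_ge hle hcard] at hu'

theorem exists_pow_eq_of_pow_eq_one_of_coprime {M : Type*} [Monoid M] {r s : ℕ}
    (hrs : r.Coprime s) {c : M} (hc : c ^ s = 1) : ∃ t : M, t ^ s = 1 ∧ t ^ r = c := by
  obtain ⟨m, hm⟩ :=
    exists_pow_eq_self_of_coprime (hrs.coprime_dvd_right (orderOf_dvd_of_pow_eq_one hc))
  exact ⟨c ^ m, by rw [← pow_mul, mul_comm, pow_mul, hc, one_pow],
    by rw [← pow_mul, mul_comm, pow_mul, hm]⟩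

theorem eq_of_pow_eq_of_pow_eq_of_coprime {G₀ : Type*} [CommGroupWithZero G₀] {r s : ℕ}
    (hrs : r.Coprime s) {x y : G₀} (hy : y ≠ 0) (hr : x ^ r = y ^ r) (hs : x ^ s = y ^ s) :
    x = y := by
  have hquot : (x / y) ^ r = 1 ∧ (x / y) ^ s = 1 := by
    simp only [div_pow, hr, hs, div_self (pow_ne_zero _ hy), and_self]
  exact (div_eq_one_iff_eq hy).mp ((pow_eq_one_iff_of_coprime hrs).mp hquot)

namespace FiniteField

variable {K : Type*} [Field K] [Fintype K] {r s d : ℕ}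

theorem ne_zero_and_ne_zero_of_mul_eq_card_sub_one (hsd : s * d = Fintype.card K - 1) :
    s ≠ 0 ∧ d ≠ 0 :=
  mul_ne_zero_iff.mp (hsd ▸ (Nat.sub_pos_of_lt Fintype.one_lt_card).ne')

theorem pow_pow_eq_one_of_mul_eq (hsd : s * d = Fintype.card K - 1) {x : K} (hx : x ≠ 0) :
    (x ^ s) ^ d = 1 := by
  rw [← pow_mul, hsd, pow_card_sub_one_eq_one x hx]

theorem exists_ne_zero_pow_eq (hsd : s * d = Fintype.card K - 1) {u : K} (hu : u ^ d = 1) :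
    ∃ x ≠ 0, x ^ s = u := by
  obtain ⟨v, rfl⟩ := IsUnit.of_pow_eq_one hu (ne_zero_and_ne_zero_of_mul_eq_card_sub_one hsd).2
  have hv : v ^ d = 1 := Units.ext (by simpa using hu)
  obtain ⟨x, rfl⟩ := IsCyclic.exists_pow_eq_of_pow_eq_one (s := s)
    (by rw [Nat.card_units, Nat.card_eq_fintype_card, hsd]) hv
  exact ⟨x, x.ne_zero, by simp⟩

theorem ne_zero_of_mapsTo_pow_mul_pow (hsd : s * d = Fintype.card K - 1) {h : K → K}
    (hψ : MapsTo (fun u => u ^ r * h u ^ s) {u | u ^ d = 1} {u | u ^ d = 1}) {u : K}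
    (hu : u ^ d = 1) : h u ≠ 0 := by
  obtain ⟨hs, hd⟩ := ne_zero_and_ne_zero_of_mul_eq_card_sub_one hsd
  intro h0
  simpa [h0, zero_pow hs, zero_pow hd] using hψ hu

theorem bijOn_pow_mul_pow_of_bijective (hsd : s * d = Fintype.card K - 1) (hrs : r.Coprime s)
    (hr : r ≠ 0) {h : K → K} (hf : Bijective fun x => x ^ r * h (x ^ s)) :
    BijOn (fun u => u ^ r * h u ^ s) {u | u ^ d = 1} {u | u ^ d = 1} := by
  set f : K → K := fun x => x ^ r * h (x ^ s)
  have hf_pow (x : K) : f x ^ s = (x ^ s) ^ r * h (x ^ s) ^ s := by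
    simp only [f, mul_pow, pow_right_comm]
  have hf_ne_zero {x : K} (hx : x ≠ 0) : f x ≠ 0 := fun h0 =>
    hx (hf.injective (h0.trans (by simp [f, zero_pow hr])))
  have hmaps : MapsTo (fun u => u ^ r * h u ^ s) {u | u ^ d = 1} {u | u ^ d = 1} := by
    rintro _ hu
    obtain ⟨x, hx, rfl⟩ := exists_ne_zero_pow_eq hsd hu
    simpa only [mem_ofPred_eq, ← hf_pow] using pow_pow_eq_one_of_mul_eq hsd (hf_ne_zero hx)
  have hinj : InjOn (fun u => u ^ r * h u ^ s) {u | u ^ d = 1} := by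
    rintro _ hu _ hv huv
    obtain ⟨x, hx, rfl⟩ := exists_ne_zero_pow_eq hsd hu
    obtain ⟨y, hy, rfl⟩ := exists_ne_zero_pow_eq hsd hv
    have hquot : (f x / f y) ^ s = 1 := by
      rw [div_pow, div_eq_one_iff_eq (pow_ne_zero _ (hf_ne_zero hy)), hf_pow, hf_pow]
      exact huv
    -- `f x = t ^ r * f y = f (t * y)` for an `s`-th root of unity `t`
    obtain ⟨t, hts, htr⟩ := exists_pow_eq_of_pow_eq_one_of_coprime hrs hquot
    have hxy : f (t * y) = f x := by
      simp only [f, mul_pow, hts, one_mul]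
      rw [htr, mul_assoc]
      exact div_mul_cancel₀ _ (hf_ne_zero hy)
    rw [← hf.injective hxy, mul_pow, hts, one_mul]
  exact (toFinite _).injOn_iff_bijOn_of_mapsTo hmaps |>.mp hinj

theorem injective_of_bijOn_pow_mul_pow (hsd : s * d = Fintype.card K - 1) (hrs : r.Coprime s)
    (hr : r ≠ 0) {h : K → K}
    (hψ : BijOn (fun u => u ^ r * h u ^ s) {u | u ^ d = 1} {u | u ^ d = 1}) :
    Injective fun x => x ^ r * h (x ^ s) := by
  have hh {x : K} (hx : x ≠ 0) : h (x ^ s) ≠ 0 :=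
    ne_zero_of_mapsTo_pow_mul_pow hsd hψ.mapsTo (pow_pow_eq_one_of_mul_eq hsd hx)
  have hf_eq_zero {x : K} : x ^ r * h (x ^ s) = 0 ↔ x = 0 := by
    refine ⟨fun h0 => by_contra fun hx => mul_ne_zero (pow_ne_zero r hx) (hh hx) h0, ?_⟩
    rintro rfl
    simp [zero_pow hr]
  intro x y (hxy : x ^ r * h (x ^ s) = y ^ r * h (y ^ s))
  rcases eq_or_ne y 0 with rfl | hy
  · exact hf_eq_zero.mp (hxy.trans (hf_eq_zero.mpr rfl))
  have hx : x ≠ 0 := fun hx => hy (hf_eq_zero.mp (hxy.symm.trans (hf_eq_zero.mpr hx)))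
  have hs_eq : x ^ s = y ^ s := by
    refine hψ.injOn (pow_pow_eq_one_of_mul_eq hsd hx) (pow_pow_eq_one_of_mul_eq hsd hy) ?_
    simpa only [mul_pow, pow_right_comm] using congrArg (· ^ s) hxy
  rw [hs_eq] at hxy
  exact eq_of_pow_eq_of_pow_eq_of_coprime hrs hy (mul_right_cancel₀ (hh hy) hxy) hs_eq

theorem bijective_pow_mul_comp_pow_iff (hsd : s * d = Fintype.card K - 1) (hrs : r.Coprime s)
    (hr : r ≠ 0) (h : K → K) :
    Bijective (fun x => x ^ r * h (x ^ s)) ↔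
      BijOn (fun u => u ^ r * h u ^ s) {u | u ^ d = 1} {u | u ^ d = 1} :=
  ⟨bijOn_pow_mul_pow_of_bijective hsd hrs hr,
    fun hψ => Finite.injective_iff_bijective.mp (injective_of_bijOn_pow_mul_pow hsd hrs hr hψ)⟩

end FiniteField

theorem pow_four_mul_pow_sub_one_eq_div {E : Type*} [Field E] {p n : ℕ} [ExpChar E p]
    {A b u : E} (hA : A ^ p ^ n = A) (hu : u ^ (p ^ n + 1) = 1) (hH : 1 + A * u + b * u ^ 3 ≠ 0) :
    u ^ 4 * (1 + A * u + b * u ^ 3) ^ (p ^ n - 1) =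
      u * (b ^ p ^ n + A * u ^ 2 + u ^ 3) / (1 + A * u + b * u ^ 3) := by
  have hfrob :
      (1 + A * u + b * u ^ 3) ^ p ^ n = 1 + A * u ^ p ^ n + b ^ p ^ n * (u ^ p ^ n) ^ 3 := by
    rw [add_pow_expChar_pow, add_pow_expChar_pow, one_pow, mul_pow, mul_pow, hA, ← pow_mul,
      ← pow_mul, mul_comm 3]
  rw [eq_div_iff hH, mul_assoc, pow_sub_one_mul (pow_ne_zero n (expChar_ne_zero E p)), hfrob]
  -- `u ^ p ^ n = u⁻¹` on the unit circle
  linear_combination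
    (A * u ^ 3 + b ^ p ^ n * u * (u ^ 2 * (u ^ p ^ n) ^ 2 + u * u ^ p ^ n + 1)) * hu

theorem pp_iff_g_permutes_mu_general (n : ℕ) (hn : 0 < n) (q : ℕ) (hq : q = 2 ^ n)
    (F E : Type*) [Field F] [Fintype F] [Field E] [Fintype E] [Algebra F E]
    (hF : Fintype.card F = q) (hE : Fintype.card E = q ^ 2)
    (a : F) (b : E) :
    Function.Bijective
        (fun x : E =>
          x ^ 4 * (1 + algebraMap F E a * x ^ (q - 1) + b * x ^ (3 * (q - 1)))) ↔
      ((∀ x ∈ {x : E | x ^ (q + 1) = 1}, 1 + algebraMap F E a * x + b * x ^ 3 ≠ 0) ∧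
        Set.BijOn
          (fun x : E =>
            x * (b ^ q + algebraMap F E a * x ^ 2 + x ^ 3) /
              (1 + algebraMap F E a * x + b * x ^ 3))
          {x : E | x ^ (q + 1) = 1} {x : E | x ^ (q + 1) = 1}) := by
  subst hq
  have : Fact (Nat.Prime 2) := ⟨Nat.prime_two⟩
  have : CharP E 2 := charP_of_card_eq_prime_pow (hE.trans (pow_mul 2 n 2).symm)
  set A := algebraMap F E a
  have hA : A ^ 2 ^ n = A := by rw [← map_pow, ← hF, FiniteField.pow_card]
  have hsd : (2 ^ n - 1) * (2 ^ n + 1) = Fintype.card E - 1 := by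
    rw [hE, mul_comm, ← Nat.sq_sub_sq, one_pow]
  have hodd : Odd (2 ^ n - 1) :=
    Nat.Even.sub_odd Nat.one_le_two_pow (Nat.even_pow.mpr ⟨even_two, hn.ne'⟩) odd_one
  have hcop : Nat.Coprime 4 (2 ^ n - 1) := (Nat.coprime_two_left.mpr hodd).pow_left 2
  have hf : (fun x : E => x ^ 4 * (1 + A * x ^ (2 ^ n - 1) + b * x ^ (3 * (2 ^ n - 1)))) =
      fun x => x ^ 4 * (1 + A * x ^ (2 ^ n - 1) + b * (x ^ (2 ^ n - 1)) ^ 3) := by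
    funext x; rw [mul_comm 3, pow_mul]
  rw [hf]
  refine (FiniteField.bijective_pow_mul_comp_pow_iff hsd hcop four_ne_zero
    (fun u => 1 + A * u + b * u ^ 3)).trans ?_
  have hψg (hH : ∀ u ∈ {u : E | u ^ (2 ^ n + 1) = 1}, 1 + A * u + b * u ^ 3 ≠ 0) :
      EqOn (fun u => u ^ 4 * (1 + A * u + b * u ^ 3) ^ (2 ^ n - 1))
        (fun u => u * (b ^ 2 ^ n + A * u ^ 2 + u ^ 3) / (1 + A * u + b * u ^ 3))
        {u | u ^ (2 ^ n + 1) = 1} :=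
    fun u hu => pow_four_mul_pow_sub_one_eq_div hA hu (hH u hu)
  refine ⟨fun hψ => ?_, fun ⟨hH, hg⟩ => (hψg hH).bijOn_iff.mpr hg⟩
  have hH : ∀ u ∈ {u : E | u ^ (2 ^ n + 1) = 1}, 1 + A * u + b * u ^ 3 ≠ 0 :=
    fun _ hu => FiniteField.ne_zero_of_mapsTo_pow_mul_pow hsd hψ.mapsTo hu
  exact ⟨hH, (hψg hH).bijOn_iff.mp hψ⟩

theorem pp_iff_g_permutes_mu (n : ℕ) (hn : 0 < n) (q : ℕ) (hq : q = 2 ^ n)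
    (F E : Type*) [Field F] [Fintype F] [Field E] [Fintype E] [Algebra F E]
    (hF : Fintype.card F = q) (hE : Fintype.card E = q ^ 2)
    (a : F) (ha : a ≠ 0) (b : E) (hb : b ≠ 0) :
    Function.Bijective
        (fun x : E =>
          x ^ 4 * (1 + algebraMap F E a * x ^ (q - 1) + b * x ^ (3 * (q - 1)))) ↔
      ((∀ x ∈ {x : E | x ^ (q + 1) = 1}, 1 + algebraMap F E a * x + b * x ^ 3 ≠ 0) ∧
        Set.BijOn
          (fun x : E =>
            x * (b ^ q + algebraMap F E a * x ^ 2 + x ^ 3) /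
              (1 + algebraMap F E a * x + b * x ^ 3))
          {x : E | x ^ (q + 1) = 1} {x : E | x ^ (q + 1) = 1}) :=
  pp_iff_g_permutes_mu_general n hn q hq F E hF hE a b
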